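/- Let I ⊆ ℝ be an interval containing 0, φ : I → ℝ be C² with φ > 0, φ(0) = 1, φ' > 0 and φ'' ≤ 0 on I. Let Ω ⊆ ℝⁿ be open, v, h ∈ C^{2,1}(Ω × (0,T]) with h > 0, v taking values in I, and ∂_t h − Δh ≥ 0. Let V be continuous, q ∈ ℝ \ {0}, and set u := h·φ(v). If ∂_t u − Δu + V·u^q ≤ ∂_t h − Δh, then ∂_t(hv) − Δ(hv) + h^q·V·φ(v)^q/φ'(v) ≤ 0 in Ω × (0,T]. -/

import Mathlib

open Set

noncomputable def lap {n : ℕ} (f : EuclideanSpace ℝ (Fin n) → ℝ)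
    (x : EuclideanSpace ℝ (Fin n)) : ℝ :=
  ∑ i, fderiv ℝ (fun y => fderiv ℝ f y (EuclideanSpace.single i 1)) x
      (EuclideanSpace.single i 1)

noncomputable def timeDeriv {n : ℕ} (u : EuclideanSpace ℝ (Fin n) → ℝ → ℝ)
    (x : EuclideanSpace ℝ (Fin n)) (t : ℝ) : ℝ :=
  deriv (u x) t

noncomputable def lapSpace {n : ℕ} (u : EuclideanSpace ℝ (Fin n) → ℝ → ℝ)
    (x : EuclideanSpace ℝ (Fin n)) (t : ℝ) : ℝ :=
  lap (fun y => u y t) x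

/-!
Put `A := ∂ₜh − Δh ≥ 0` and `B := h ∂ₜv − 2⟨∇h, ∇v⟩ − hΔv`. The product and chain rules give
`∂ₜ(hv) − Δ(hv) = vA + B` and `∂ₜu − Δu = φ(v)A + φ'(v)B − hφ''(v)|∇v|²`, so the hypothesis
and `φ'' ≤ 0` yield `φ'(v)B + V u^q ≤ (1 − φ(v))A`. Multiplying the claim by `φ'(v) > 0`, it
remains to see `(φ'(v)v − φ(v) + 1)A ≤ 0`, which holds because the tangent line of the concave
`φ` at `v` lies above `φ(0) = 1`.
-/

open Filter Topology

theorem ConcaveOn.deriv_mul_sub_le {S : Set ℝ} {f : ℝ → ℝ} {x y : ℝ} (hf : ConcaveOn ℝ S f)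
    (hx : x ∈ S) (hy : y ∈ S) (hfd : DifferentiableAt ℝ f y) :
    deriv f y * (y - x) ≤ f y - f x := by
  rcases lt_trichotomy x y with hxy | rfl | hyx
  · have := hf.deriv_le_slope hx hy hxy hfd
    rwa [slope_def_field, le_div_iff₀ (sub_pos.2 hxy)] at this
  · simp
  · have := hf.slope_le_deriv hy hx hyx hfd
    rw [slope_def_field, div_le_iff₀ (sub_pos.2 hyx)] at this
    linarith

section DirectionalDerivatives

variable {E : Type*} [NormedAddCommGroup E] [NormedSpace ℝ E] {f g w : E → ℝ} {φ : ℝ → ℝ}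
  {x : E}

theorem ContDiffAt.eventually_differentiableAt (hf : ContDiffAt ℝ 2 f x) :
    ∀ᶠ y in 𝓝 x, DifferentiableAt ℝ f y := by
  filter_upwards [hf.eventually (by norm_num)] with y hy
  exact hy.differentiableAt two_ne_zero

theorem ContDiffAt.differentiableAt_fderiv_apply (hf : ContDiffAt ℝ 2 f x) (e : E) :
    DifferentiableAt ℝ (fun y => fderiv ℝ f y e) x :=
  ((hf.fderiv_right (m := 1) (by norm_num)).differentiableAt one_ne_zero).clm_apply
    (differentiableAt_const e)

theorem fderiv_comp_apply_eq_deriv_mul (hφ : DifferentiableAt ℝ φ (w x))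
    (hw : DifferentiableAt ℝ w x) (e : E) :
    fderiv ℝ (fun y => φ (w y)) x e = deriv φ (w x) * fderiv ℝ w x e := by
  have hcomp : HasFDerivAt (fun y => φ (w y)) (deriv φ (w x) • fderiv ℝ w x) x :=
    hφ.hasDerivAt.comp_hasFDerivAt x hw.hasFDerivAt
  rw [hcomp.fderiv]
  simp

theorem fderiv_fderiv_mul_apply (hf : ContDiffAt ℝ 2 f x) (hg : ContDiffAt ℝ 2 g x) (e : E) :
    fderiv ℝ (fun y => fderiv ℝ (fun z => f z * g z) y e) x e
      = fderiv ℝ (fun y => fderiv ℝ f y e) x e * g x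
        + 2 * (fderiv ℝ f x e * fderiv ℝ g x e)
        + f x * fderiv ℝ (fun y => fderiv ℝ g y e) x e := by
  have hfd := hf.differentiableAt two_ne_zero
  have hgd := hg.differentiableAt two_ne_zero
  have hfirst : (fun y => fderiv ℝ (fun z => f z * g z) y e)
      =ᶠ[𝓝 x] fun y => fderiv ℝ f y e * g y + f y * fderiv ℝ g y e := by
    filter_upwards [hf.eventually_differentiableAt, hg.eventually_differentiableAt]
      with y hfy hgy
    rw [fderiv_fun_mul hfy hgy]
    simp only [add_apply, smul_apply, smul_eq_mul]
    ring
  rw [hfirst.fderiv_eq,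
    fderiv_fun_add ((hf.differentiableAt_fderiv_apply e).fun_mul hgd)
      (hfd.fun_mul (hg.differentiableAt_fderiv_apply e)),
    fderiv_fun_mul (hf.differentiableAt_fderiv_apply e) hgd,
    fderiv_fun_mul hfd (hg.differentiableAt_fderiv_apply e)]
  simp only [add_apply, smul_apply, smul_eq_mul]
  ring

theorem fderiv_fderiv_comp_apply (hφ : ContDiffAt ℝ 2 φ (w x)) (hw : ContDiffAt ℝ 2 w x)
    (e : E) :
    fderiv ℝ (fun y => fderiv ℝ (fun z => φ (w z)) y e) x e
      = deriv (deriv φ) (w x) * fderiv ℝ w x e ^ 2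
        + deriv φ (w x) * fderiv ℝ (fun y => fderiv ℝ w y e) x e := by
  have hwd := hw.differentiableAt two_ne_zero
  have hφ'd : DifferentiableAt ℝ (deriv φ) (w x) :=
    (hφ.derivWithin (m := 1) (by norm_num)).differentiableAt one_ne_zero
  have hfirst : (fun y => fderiv ℝ (fun z => φ (w z)) y e)
      =ᶠ[𝓝 x] fun y => deriv φ (w y) * fderiv ℝ w y e := by
    filter_upwards [hw.eventually_differentiableAt,
      hwd.continuousAt.eventually hφ.eventually_differentiableAt] with y hwy hφy
    exact fderiv_comp_apply_eq_deriv_mul hφy hwy e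
  have hφ'w : DifferentiableAt ℝ (fun y => deriv φ (w y)) x := hφ'd.comp x hwd
  rw [hfirst.fderiv_eq, fderiv_fun_mul hφ'w (hw.differentiableAt_fderiv_apply e)]
  simp only [add_apply, smul_apply, smul_eq_mul, fderiv_comp_apply_eq_deriv_mul hφ'd hwd]
  ring

end DirectionalDerivatives

section Laplacian

variable {n : ℕ} {f g w : EuclideanSpace ℝ (Fin n) → ℝ} {φ : ℝ → ℝ}
  {x : EuclideanSpace ℝ (Fin n)}

noncomputable def gradInner (f g : EuclideanSpace ℝ (Fin n) → ℝ)
    (x : EuclideanSpace ℝ (Fin n)) : ℝ :=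
  ∑ i, fderiv ℝ f x (EuclideanSpace.single i 1) * fderiv ℝ g x (EuclideanSpace.single i 1)

theorem gradInner_self_nonneg : 0 ≤ gradInner f f x :=
  Finset.sum_nonneg fun _ _ => mul_self_nonneg _

theorem gradInner_comp_right (hφ : DifferentiableAt ℝ φ (w x)) (hw : DifferentiableAt ℝ w x) :
    gradInner f (fun y => φ (w y)) x = deriv φ (w x) * gradInner f w x := by
  simp only [gradInner, Finset.mul_sum, fderiv_comp_apply_eq_deriv_mul hφ hw]
  exact Finset.sum_congr rfl fun _ _ => by ring

theorem lap_mul (hf : ContDiffAt ℝ 2 f x) (hg : ContDiffAt ℝ 2 g x) :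
    lap (fun y => f y * g y) x = lap f x * g x + 2 * gradInner f g x + f x * lap g x := by
  simp only [lap, gradInner, fderiv_fderiv_mul_apply hf hg, Finset.sum_add_distrib,
    Finset.sum_mul, Finset.mul_sum]

theorem lap_comp (hφ : ContDiffAt ℝ 2 φ (w x)) (hw : ContDiffAt ℝ 2 w x) :
    lap (fun y => φ (w y)) x
      = deriv (deriv φ) (w x) * gradInner w w x + deriv φ (w x) * lap w x := by
  simp only [lap, gradInner, fderiv_fderiv_comp_apply hφ hw, Finset.sum_add_distrib,
    Finset.mul_sum, sq]

end Laplacian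

section HeatOperator

variable {n : ℕ} {h w : EuclideanSpace ℝ (Fin n) → ℝ → ℝ} {φ : ℝ → ℝ}
  {x : EuclideanSpace ℝ (Fin n)} {t : ℝ}

noncomputable def heatOp (u : EuclideanSpace ℝ (Fin n) → ℝ → ℝ) (x : EuclideanSpace ℝ (Fin n))
    (t : ℝ) : ℝ :=
  timeDeriv u x t - lapSpace u x t

theorem heatOp_mul (hhx : ContDiffAt ℝ 2 (fun y => h y t) x)
    (hwx : ContDiffAt ℝ 2 (fun y => w y t) x) (hht : DifferentiableAt ℝ (h x) t)
    (hwt : DifferentiableAt ℝ (w x) t) :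
    heatOp (fun y s => h y s * w y s) x t
      = heatOp h x t * w x t + h x t * heatOp w x t
        - 2 * gradInner (fun y => h y t) (fun y => w y t) x := by
  simp only [heatOp, timeDeriv, lapSpace]
  rw [deriv_fun_mul hht hwt, lap_mul hhx hwx]
  ring

theorem heatOp_comp (hφ : ContDiffAt ℝ 2 φ (w x t)) (hwx : ContDiffAt ℝ 2 (fun y => w y t) x)
    (hwt : DifferentiableAt ℝ (w x) t) :
    heatOp (fun y s => φ (w y s)) x t
      = deriv φ (w x t) * heatOp w x t
        - deriv (deriv φ) (w x t) * gradInner (fun y => w y t) (fun y => w y t) x := by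
  have hcomp : HasDerivAt (fun s => φ (w x s)) (deriv φ (w x t) * deriv (w x) t) t :=
    (hφ.differentiableAt two_ne_zero).hasDerivAt.comp t hwt.hasDerivAt
  simp only [heatOp, timeDeriv, lapSpace]
  rw [hcomp.deriv, lap_comp hφ hwx]
  ring

end HeatOperator

theorem lemma43_le_general {n : ℕ} (T : ℝ)
    (Ω : Set (EuclideanSpace ℝ (Fin n)))
    (I : Set ℝ) (hIopen : IsOpen I) (hIconn : I.OrdConnected) (h0I : (0:ℝ) ∈ I)
    (φ : ℝ → ℝ) (hφ : ContDiffOn ℝ 2 φ I)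
    (hφpos : ∀ s ∈ I, 0 < φ s) (hφ0 : φ 0 = 1)
    (hφ'pos : ∀ s ∈ I, 0 < deriv φ s)
    (hφ'' : ∀ s ∈ I, deriv (deriv φ) s ≤ 0)
    (v h : EuclideanSpace ℝ (Fin n) → ℝ → ℝ)
    (hvx : ∀ x ∈ Ω, ∀ t ∈ Ioc (0:ℝ) T, ContDiffAt ℝ 2 (fun y => v y t) x)
    (hhx : ∀ x ∈ Ω, ∀ t ∈ Ioc (0:ℝ) T, ContDiffAt ℝ 2 (fun y => h y t) x)
    (hvt : ∀ x ∈ Ω, ∀ t ∈ Ioc (0:ℝ) T, DifferentiableAt ℝ (v x) t)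
    (hht : ∀ x ∈ Ω, ∀ t ∈ Ioc (0:ℝ) T, DifferentiableAt ℝ (h x) t)
    (hvI : ∀ x ∈ Ω, ∀ t ∈ Ioc (0:ℝ) T, v x t ∈ I)
    (hhpos : ∀ x ∈ Ω, ∀ t ∈ Ioc (0:ℝ) T, 0 < h x t)
    (hheat : ∀ x ∈ Ω, ∀ t ∈ Ioc (0:ℝ) T, 0 ≤ timeDeriv h x t - lapSpace h x t)
    (V : EuclideanSpace ℝ (Fin n) → ℝ → ℝ)
    (q : ℝ)
    (u : EuclideanSpace ℝ (Fin n) → ℝ → ℝ)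
    (hu : u = fun y s => h y s * φ (v y s))
    (hineq : ∀ x ∈ Ω, ∀ t ∈ Ioc (0:ℝ) T,
      timeDeriv u x t - lapSpace u x t + V x t * u x t ^ q
        ≤ timeDeriv h x t - lapSpace h x t) :
    ∀ x ∈ Ω, ∀ t ∈ Ioc (0:ℝ) T,
      timeDeriv (fun y s => h y s * v y s) x t
          - lapSpace (fun y s => h y s * v y s) x t
          + h x t ^ q * V x t * φ (v x t) ^ q / deriv φ (v x t) ≤ 0 := by
  subst hu
  have hconcave : ConcaveOn ℝ I φ :=
    concaveOn_of_deriv2_nonpos' hIconn.convex (hφ.differentiableOn two_ne_zero)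
      ((hφ.deriv_of_isOpen hIopen (m := 1) (by norm_num)).differentiableOn one_ne_zero) hφ''
  intro x hx t ht
  specialize hvI x hx t ht
  specialize hvx x hx t ht
  specialize hvt x hx t ht
  specialize hhx x hx t ht
  specialize hht x hx t ht
  have hφ2 : ContDiffAt ℝ 2 φ (v x t) := hφ.contDiffAt (hIopen.mem_nhds hvI)
  have hφd := hφ2.differentiableAt two_ne_zero
  have heat_hφv := heatOp_mul (w := fun y s => φ (v y s)) hhx (hφ2.comp x hvx) hht (hφd.comp t hvt)
  rw [heatOp_comp hφ2 hvx hvt, gradInner_comp_right hφd (hvx.differentiableAt two_ne_zero)]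
    at heat_hφv
  have htangent : deriv φ (v x t) * v x t ≤ φ (v x t) - 1 := by
    simpa [hφ0] using hconcave.deriv_mul_sub_le h0I hvI hφd
  have hcurv : h x t * (deriv (deriv φ) (v x t) *
      gradInner (fun y => v y t) (fun y => v y t) x) ≤ 0 :=
    mul_nonpos_of_nonneg_of_nonpos (hhpos x hx t ht).le
      (mul_nonpos_of_nonpos_of_nonneg (hφ'' _ hvI) gradInner_self_nonneg)
  have hA : 0 ≤ heatOp h x t := hheat x hx t ht
  have hsuper := hineq x hx t ht
  change heatOp _ x t + _ ≤ heatOp h x t at hsuper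
  rw [heat_hφv, Real.mul_rpow (hhpos x hx t ht).le (hφpos _ hvI).le] at hsuper
  change heatOp _ x t + _ ≤ 0
  rw [heatOp_mul hhx hvx hht hvt, ← mul_le_mul_iff_of_pos_left (hφ'pos _ hvI), mul_zero,
    mul_add, mul_div_cancel₀ _ (hφ'pos _ hvI).ne']
  linarith [mul_le_mul_of_nonneg_left htangent hA]

/-- Lemma 4.3 (Euclidean case): if `u = h·φ(v)` satisfies
`∂ₜu − Δu + V u^q ≤ ∂ₜh − Δh` in `Q_T` (with `φ(0)=1`, `φ' > 0`, `φ'' ≤ 0`,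
`∂ₜh − Δh ≥ 0`), then `∂ₜ(hv) − Δ(hv) + h^q V φ(v)^q/φ'(v) ≤ 0` in `Q_T`. -/
theorem lemma43_le {n : ℕ} (T : ℝ)
    (Ω : Set (EuclideanSpace ℝ (Fin n))) (hΩ : IsOpen Ω)
    (I : Set ℝ) (hIopen : IsOpen I) (hIconn : I.OrdConnected) (h0I : (0:ℝ) ∈ I)
    (φ : ℝ → ℝ) (hφ : ContDiffOn ℝ 2 φ I)
    (hφpos : ∀ s ∈ I, 0 < φ s) (hφ0 : φ 0 = 1)
    (hφ'pos : ∀ s ∈ I, 0 < deriv φ s)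
    (hφ'' : ∀ s ∈ I, deriv (deriv φ) s ≤ 0)
    (v h : EuclideanSpace ℝ (Fin n) → ℝ → ℝ)
    (hvx : ∀ x ∈ Ω, ∀ t ∈ Ioc (0:ℝ) T, ContDiffAt ℝ 2 (fun y => v y t) x)
    (hhx : ∀ x ∈ Ω, ∀ t ∈ Ioc (0:ℝ) T, ContDiffAt ℝ 2 (fun y => h y t) x)
    (hvt : ∀ x ∈ Ω, ∀ t ∈ Ioc (0:ℝ) T, DifferentiableAt ℝ (v x) t)
    (hht : ∀ x ∈ Ω, ∀ t ∈ Ioc (0:ℝ) T, DifferentiableAt ℝ (h x) t)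
    (hvI : ∀ x ∈ Ω, ∀ t ∈ Ioc (0:ℝ) T, v x t ∈ I)
    (hhpos : ∀ x ∈ Ω, ∀ t ∈ Ioc (0:ℝ) T, 0 < h x t)
    (hheat : ∀ x ∈ Ω, ∀ t ∈ Ioc (0:ℝ) T, 0 ≤ timeDeriv h x t - lapSpace h x t)
    (V : EuclideanSpace ℝ (Fin n) → ℝ → ℝ)
    (hV : ContinuousOn (fun p : EuclideanSpace ℝ (Fin n) × ℝ => V p.1 p.2) (Ω ×ˢ Ioc 0 T))
    (q : ℝ) (hq : q ≠ 0)
    (u : EuclideanSpace ℝ (Fin n) → ℝ → ℝ)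
    (hu : u = fun y s => h y s * φ (v y s))
    (hineq : ∀ x ∈ Ω, ∀ t ∈ Ioc (0:ℝ) T,
      timeDeriv u x t - lapSpace u x t + V x t * u x t ^ q
        ≤ timeDeriv h x t - lapSpace h x t) :
    ∀ x ∈ Ω, ∀ t ∈ Ioc (0:ℝ) T,
      timeDeriv (fun y s => h y s * v y s) x t
          - lapSpace (fun y s => h y s * v y s) x t
          + h x t ^ q * V x t * φ (v x t) ^ q / deriv φ (v x t) ≤ 0 :=
  lemma43_le_general T Ω I hIopen hIconn h0I φ hφ hφpos hφ0 hφ'pos hφ'' v h hvx hhx hvt hht hvI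
    hhpos hheat V q u hu hineq
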